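/- Let k be a commutative ring, and let π₁: A₁ → S and π₂: A₂ → S be surjective homomorphisms of commutative k-algebras. Suppose there exists a k-algebra homomorphism σ: A₂ → A₁ with π₁ ∘ σ = π₂ (this holds, for instance, when A₂ is a polynomial k-algebra). Let J₁ = ker(π₁) and J₁₂ = ker(π₁₂: A₁⊗_kA₂ → S), where π₁₂(a⊗b) = π₁(a)·π₂(b). Then the sequence of S-modules 0 → J₁/J₁² → J₁₂/J₁₂² → S ⊗_{A₂} Ω_{A₂/k} → 0 is exact, where the first map is induced by a ↦ a⊗1 and the second map is induced by the map A₁⊗_kA₂ → S ⊗_{A₂} Ω_{A₂/k} determined by a⊗b ↦ π₁(a) ⊗ d(b), with d: A₂ → Ω_{A₂/k} the universal derivation. (This is the short exact sequence of conormal data comparing the truncated cotangent complexes of two embeddings of Spec S, used to show independence of the truncated cotangent complex of the chosen embedding.) -/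
import Mathlib


/-!
STATEMENT 8: Given surjections `π₁ : A₁ → S`, `π₂ : A₂ → S` of commutative `k`-algebras
and a `k`-algebra map `σ : A₂ → A₁` with `π₁ ∘ σ = π₂`, with `J₁ = ker π₁`,
`J₁₂ = ker (π₁₂ : A₁ ⊗[k] A₂ → S)`, the sequence of modules
`0 → J₁/J₁² → J₁₂/J₁₂² → S ⊗[A₂] Ω[A₂⁄k] → 0` is exact, where the first map is induced
by `a ↦ a ⊗ 1` and the second by `a ⊗ b ↦ π₁(a) ⊗ d(b)`. Here `S` is an `A₂`-algebra
via `π₂`.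
-/

open TensorProduct

noncomputable section

variable (k A₁ A₂ S : Type) [CommRing k] [CommRing A₁] [CommRing A₂] [CommRing S]
  [Algebra k A₁] [Algebra k A₂] [Algebra k S]

/-- The map `π₁₂ : A₁ ⊗[k] A₂ → S`, `a ⊗ b ↦ π₁(a)·π₂(b)`. -/
abbrev pi12 (π₁ : A₁ →ₐ[k] S) (π₂ : A₂ →ₐ[k] S) : A₁ ⊗[k] A₂ →ₐ[k] S :=
  Algebra.TensorProduct.productMap π₁ π₂

section
variable [Algebra A₂ S] [IsScalarTower k A₂ S]

/-- The `k`-bilinear map underlying the natural map `S ⊗[k] Ω[A₂⁄k] → S ⊗[A₂] Ω[A₂⁄k]`. -/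
def mkk : S →ₗ[k] Ω[A₂⁄k] →ₗ[k] S ⊗[A₂] Ω[A₂⁄k] where
  toFun s := ((TensorProduct.mk A₂ S (Ω[A₂⁄k])) s).restrictScalars k
  map_add' s t := LinearMap.ext fun ω => TensorProduct.add_tmul s t ω
  map_smul' c s := LinearMap.ext fun ω => (TensorProduct.smul_tmul' c s ω).symm

/-- The map `Φ : A₁ ⊗[k] A₂ → S ⊗[A₂] Ω[A₂⁄k]`, `a ⊗ b ↦ π₁(a) ⊗ d(b)`. -/
def PhiMap (π₁ : A₁ →ₐ[k] S) : A₁ ⊗[k] A₂ →ₗ[k] S ⊗[A₂] Ω[A₂⁄k] :=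
  (TensorProduct.lift (mkk k A₂ S)).comp
    (TensorProduct.map π₁.toLinearMap (KaehlerDifferential.D k A₂).toLinearMap)


variable {k A₁ A₂ S}

lemma PhiMap_tmul (π₁ : A₁ →ₐ[k] S) (a : A₁) (b : A₂) :
    PhiMap k A₁ A₂ S π₁ (a ⊗ₜ b) = π₁ a ⊗ₜ (KaehlerDifferential.D k A₂) b := rfl

lemma Phi_mul (π₁ : A₁ →ₐ[k] S) (π₂ : A₂ →ₐ[k] S)
    (hps : ∀ b, algebraMap A₂ S b = π₂ b) (p q : A₁ ⊗[k] A₂) :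
    PhiMap k A₁ A₂ S π₁ (p * q) = pi12 k A₁ A₂ S π₁ π₂ p • PhiMap k A₁ A₂ S π₁ q
      + pi12 k A₁ A₂ S π₁ π₂ q • PhiMap k A₁ A₂ S π₁ p := by
  induction p using TensorProduct.induction_on with
  | zero => simp
  | add x y hx hy =>
    rw [add_mul, map_add, hx, hy, map_add, map_add]
    module
  | tmul a b =>
    induction q using TensorProduct.induction_on with
    | zero => simp
    | add x y hx hy =>
      rw [mul_add, map_add, hx, hy, map_add, map_add]
      module
    | tmul a' b' =>
      rw [Algebra.TensorProduct.tmul_mul_tmul, PhiMap_tmul, PhiMap_tmul, PhiMap_tmul]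
      rw [map_mul, Derivation.leibniz]
      rw [TensorProduct.tmul_add, TensorProduct.tmul_smul, TensorProduct.tmul_smul]
      rw [TensorProduct.smul_tmul', TensorProduct.smul_tmul']
      simp only [Algebra.TensorProduct.productMap_apply_tmul, hps, smul_eq_mul, map_mul]
      rw [TensorProduct.smul_tmul', TensorProduct.smul_tmul']
      simp only [Algebra.smul_def, hps, smul_eq_mul]
      simp only [Algebra.algebraMap_self, RingHom.id_apply]
      ring_nf

set_option maxHeartbeats 1000000 in
theorem statement8_aux (π₁ : A₁ →ₐ[k] S) (π₂ : A₂ →ₐ[k] S)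
    (h₁ : Function.Surjective π₁)
    (σ : A₂ →ₐ[k] A₁) (hσ : π₁.comp σ = π₂)
    (hps : ∀ b, algebraMap A₂ S b = π₂ b) :
    ∃ (f₁ : (RingHom.ker π₁).Cotangent →+ (RingHom.ker (pi12 k A₁ A₂ S π₁ π₂)).Cotangent)
      (f₂ : (RingHom.ker (pi12 k A₁ A₂ S π₁ π₂)).Cotangent →+ S ⊗[A₂] Ω[A₂⁄k]),
      (∀ (x : RingHom.ker π₁)
          (h : ((x : A₁) ⊗ₜ[k] (1 : A₂)) ∈ RingHom.ker (pi12 k A₁ A₂ S π₁ π₂)),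
          f₁ ((RingHom.ker π₁).toCotangent x) =
            (RingHom.ker (pi12 k A₁ A₂ S π₁ π₂)).toCotangent ⟨(x : A₁) ⊗ₜ[k] (1 : A₂), h⟩) ∧
      (∀ x : RingHom.ker (pi12 k A₁ A₂ S π₁ π₂),
          f₂ ((RingHom.ker (pi12 k A₁ A₂ S π₁ π₂)).toCotangent x) =
            PhiMap k A₁ A₂ S π₁ (x : A₁ ⊗[k] A₂)) ∧
      Function.Injective f₁ ∧ Function.Exact f₁ f₂ ∧ Function.Surjective f₂ := by
  classical
  set P := A₁ ⊗[k] A₂ with hP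
  set π : P →ₐ[k] S := pi12 k A₁ A₂ S π₁ π₂ with hπdef
  set J : Ideal P := RingHom.ker π with hJ
  set J₁ : Ideal A₁ := RingHom.ker π₁ with hJ₁
  have hσb : ∀ b, π₁ (σ b) = π₂ b := fun b => AlgHom.congr_fun hσ b
  have hπtmul : ∀ (a : A₁) (b : A₂), π (a ⊗ₜ[k] b) = π₁ a * π₂ b := fun a b => rfl
  -- τ : P → A₁, a ⊗ b ↦ a * σ b
  set τ : P →ₐ[k] A₁ := Algebra.TensorProduct.productMap (AlgHom.id k A₁) σ with hτdef
  have hτtmul : ∀ (a : A₁) (b : A₂), τ (a ⊗ₜ[k] b) = a * σ b := fun a b => rfl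
  have hτπ : ∀ p : P, π₁ (τ p) = π p := by
    intro p
    induction p using TensorProduct.induction_on with
    | zero => simp
    | add x y hx hy => rw [map_add, map_add, map_add, hx, hy]
    | tmul a b => rw [hτtmul, hπtmul, map_mul, hσb]
  have hmem1 : ∀ x : A₁, x ∈ J₁ → (x ⊗ₜ[k] (1 : A₂)) ∈ J := by
    intro x hx
    have : π₁ x = 0 := hx
    simp [hJ, RingHom.mem_ker, hπtmul, this]
  have hmemτ : ∀ p : P, p ∈ J → τ p ∈ J₁ := by
    intro p hp
    have : π p = 0 := hp
    simp [hJ₁, RingHom.mem_ker, hτπ, this]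
  -- f₁ : J₁/J₁² → J/J²
  have hcoe_smul₁ : ∀ (a : A₁) (y : J), ((a • y : J) : P) = (a ⊗ₜ[k] (1:A₂)) * (y : P) := by
    intro a y
    rw [Submodule.coe_smul_of_tower, Algebra.smul_def]
    rfl
  let ℓ₁ : J₁ →ₗ[A₁] J.Cotangent :=
    { toFun := fun x => J.toCotangent ⟨(x : A₁) ⊗ₜ[k] (1:A₂), hmem1 x x.2⟩
      map_add' := by
        intro x y
        rw [← map_add]
        exact congrArg J.toCotangent (Subtype.ext (TensorProduct.add_tmul _ _ _))
      map_smul' := by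
        intro a x
        rw [RingHom.id_apply, ← (J.toCotangent).map_smul_of_tower a]
        refine congrArg J.toCotangent (Subtype.ext ?_)
        rw [hcoe_smul₁, Algebra.TensorProduct.tmul_mul_tmul, mul_one]
        rfl }
  have hℓ₁cond : (J₁ • ⊤ : Submodule A₁ J₁) ≤ LinearMap.ker ℓ₁ := by
    refine Submodule.smul_le.mpr ?_
    intro r hr n _
    rw [LinearMap.mem_ker]
    show J.toCotangent ⟨((r • n : J₁) : A₁) ⊗ₜ[k] (1:A₂), _⟩ = 0
    rw [Ideal.toCotangent_eq_zero]
    show (((r • n : J₁) : A₁) ⊗ₜ[k] (1:A₂) : P) ∈ J ^ 2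
    have : ((r • n : J₁) : A₁) ⊗ₜ[k] (1:A₂) = ((r ⊗ₜ[k] (1:A₂)) * ((n : A₁) ⊗ₜ[k] (1:A₂)) : P) := by
      simp [Algebra.TensorProduct.tmul_mul_tmul, smul_eq_mul]
    rw [this, pow_two]
    exact Ideal.mul_mem_mul (hmem1 r hr) (hmem1 n n.2)
  let f₁lin : J₁.Cotangent →ₗ[A₁] J.Cotangent := Submodule.liftQ _ ℓ₁ hℓ₁cond
  have hf₁ : ∀ (x : J₁) (h : ((x : A₁) ⊗ₜ[k] (1 : A₂)) ∈ J),
      f₁lin (J₁.toCotangent x) = J.toCotangent ⟨(x : A₁) ⊗ₜ[k] (1 : A₂), h⟩ := fun x h => rfl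
  -- f₂ : J/J² → S ⊗[A₂] Ω
  letI instPM : Module P (S ⊗[A₂] Ω[A₂⁄k]) := Module.compHom _ π.toRingHom
  have hPM_smul : ∀ (p : P) (m : S ⊗[A₂] Ω[A₂⁄k]), p • m = π p • m := fun p m => rfl
  have hcoe_smulP : ∀ (p : P) (y : J), ((p • y : J) : P) = p * (y : P) := fun p y => rfl
  let ℓ₂ : J →ₗ[P] S ⊗[A₂] Ω[A₂⁄k] :=
    { toFun := fun x => PhiMap k A₁ A₂ S π₁ (x : P)
      map_add' := fun x y => map_add _ _ _
      map_smul' := by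
        intro p x
        rw [RingHom.id_apply, hPM_smul]
        show PhiMap k A₁ A₂ S π₁ ((p • x : J) : P) = π p • PhiMap k A₁ A₂ S π₁ (x : P)
        rw [hcoe_smulP, Phi_mul π₁ π₂ hps]
        have : π (x : P) = 0 := x.2
        rw [← hπdef, this, zero_smul, add_zero]
    }
  have hℓ₂cond : (J • ⊤ : Submodule P J) ≤ LinearMap.ker ℓ₂ := by
    refine Submodule.smul_le.mpr ?_
    intro r hr n _
    rw [LinearMap.mem_ker]
    show PhiMap k A₁ A₂ S π₁ ((r • n : J) : P) = 0
    rw [hcoe_smulP, Phi_mul π₁ π₂ hps]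
    have h1 : π ((n : J) : P) = 0 := n.2
    have h2 : π r = 0 := hr
    rw [← hπdef, h1, h2, zero_smul, zero_smul, add_zero]
  let f₂lin : J.Cotangent →ₗ[P] S ⊗[A₂] Ω[A₂⁄k] := Submodule.liftQ _ ℓ₂ hℓ₂cond
  have hf₂ : ∀ x : J, f₂lin (J.toCotangent x) = PhiMap k A₁ A₂ S π₁ (x : P) := fun x => rfl
  -- S-module structure on J.Cotangent
  have hπs : Function.Surjective π := by
    intro s
    obtain ⟨a, ha⟩ := h₁ s
    exact ⟨a ⊗ₜ[k] 1, by rw [hπtmul, map_one, mul_one, ha]⟩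
  let e : (P ⧸ J) ≃ₐ[k] S := Ideal.quotientKerAlgEquivOfSurjective hπs
  have he : ∀ p : P, e (Ideal.Quotient.mk J p) = π p := fun p => rfl
  have hesymm : ∀ p : P, e.symm (π p) = Ideal.Quotient.mk J p := by
    intro p
    rw [← he p, AlgEquiv.symm_apply_apply]
  letI instSCot : Module S J.Cotangent :=
    Module.compHom _ ((e.symm : S ≃ₐ[k] (P ⧸ J)) : S →+* (P ⧸ J))
  have hSsmul : ∀ (s : S) (x : J.Cotangent), s • x = (e.symm s) • x := fun s x => rfl
  have hmkQ : ∀ (p : P) (y : J),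
      (Ideal.Quotient.mk J p) • J.toCotangent y = J.toCotangent (p • y) := fun p y => rfl
  have hmk : ∀ (p : P) (x : J.Cotangent), (Ideal.Quotient.mk J p) • x = p • x := by
    intro p x
    obtain ⟨y, rfl⟩ := J.toCotangent_surjective x
    rw [hmkQ]
    exact (map_smul J.toCotangent p y).symm
  have hπsmul : ∀ (p : P) (x : J.Cotangent), π p • x = p • x := by
    intro p x
    rw [hSsmul, hesymm, hmk]
  -- A₂-module structure on J.Cotangent
  letI instA2P : Algebra A₂ P := Algebra.TensorProduct.rightAlgebra
  have halgA2P : ∀ b : A₂, algebraMap A₂ P b = (1:A₁) ⊗ₜ[k] b := fun b => rfl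
  have halgkP : ∀ c : k, (algebraMap k P) c = (1:A₁) ⊗ₜ[k] (algebraMap k A₂ c) := by
    intro c
    rw [Algebra.TensorProduct.algebraMap_apply, Algebra.algebraMap_eq_smul_one,
      Algebra.algebraMap_eq_smul_one (A := A₂), TensorProduct.smul_tmul]
  letI instTkA2P : IsScalarTower k A₂ P := IsScalarTower.of_algebraMap_eq (by
    intro c
    rw [halgkP]
    rfl )
  have hA2smul : ∀ (b : A₂) (x : J.Cotangent), b • x = ((1:A₁) ⊗ₜ[k] b) • x := by
    intro b x
    obtain ⟨y, rfl⟩ := J.toCotangent_surjective x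
    rfl
  letI instTA2S : IsScalarTower A₂ S J.Cotangent := ⟨by
    intro b s x
    have hbs : b • s = π₂ b * s := by rw [Algebra.smul_def, hps]
    have hb : π₂ b = π ((1:A₁) ⊗ₜ[k] b) := by rw [hπtmul, map_one, one_mul]
    rw [hbs, hSsmul, map_mul, mul_smul, hb, hesymm, hmk, ← hA2smul, ← hSsmul]⟩
  -- the derivation b ↦ [1 ⊗ b - σ b ⊗ 1]
  have hmemE : ∀ b : A₂, ((1:A₁) ⊗ₜ[k] b - σ b ⊗ₜ[k] (1:A₂) : P) ∈ J := by
    intro b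
    show π ((1:A₁) ⊗ₜ[k] b - σ b ⊗ₜ[k] (1:A₂)) = 0
    rw [map_sub, hπtmul, hπtmul, map_one, map_one, one_mul, mul_one, hσb, sub_self]
  let E : A₂ → J.Cotangent := fun b => J.toCotangent ⟨_, hmemE b⟩
  let der : Derivation k A₂ J.Cotangent :=
    { toFun := E
      map_add' := by
        intro b b'
        show E (b + b') = E b + E b'
        rw [← map_add]
        refine congrArg J.toCotangent (Subtype.ext ?_)
        show (1:A₁) ⊗ₜ[k] (b + b') - σ (b + b') ⊗ₜ[k] (1:A₂)
          = ((1:A₁) ⊗ₜ[k] b - σ b ⊗ₜ[k] (1:A₂)) + ((1:A₁) ⊗ₜ[k] b' - σ b' ⊗ₜ[k] (1:A₂))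
        rw [TensorProduct.tmul_add, map_add, TensorProduct.add_tmul]
        ring
      map_smul' := by
        intro c b
        show E (c • b) = c • E b
        rw [← J.toCotangent.map_smul_of_tower c]
        refine congrArg J.toCotangent (Subtype.ext ?_)
        show (1:A₁) ⊗ₜ[k] (c • b) - σ (c • b) ⊗ₜ[k] (1:A₂)
          = c • ((1:A₁) ⊗ₜ[k] b - σ b ⊗ₜ[k] (1:A₂))
        rw [TensorProduct.tmul_smul, map_smul, smul_sub, TensorProduct.smul_tmul',
          TensorProduct.smul_tmul']
      map_one_eq_zero' := by
        show E 1 = 0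
        rw [Ideal.toCotangent_eq_zero]
        show ((1:A₁) ⊗ₜ[k] (1:A₂) - σ 1 ⊗ₜ[k] (1:A₂) : P) ∈ J ^ 2
        rw [map_one, sub_self]
        exact zero_mem _
      leibniz' := by
        intro b b'
        show E (b * b') = b • E b' + b' • E b
        rw [hA2smul, hA2smul, ← map_smul, ← map_smul, ← map_add, Ideal.toCotangent_eq]
        show ((1:A₁) ⊗ₜ[k] (b * b') - σ (b * b') ⊗ₜ[k] (1:A₂))
            - (((1:A₁) ⊗ₜ[k] b) * ((1:A₁) ⊗ₜ[k] b' - σ b' ⊗ₜ[k] (1:A₂))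
              + ((1:A₁) ⊗ₜ[k] b') * ((1:A₁) ⊗ₜ[k] b - σ b ⊗ₜ[k] (1:A₂))) ∈ J ^ 2
        have key : ((1:A₁) ⊗ₜ[k] (b * b') - σ (b * b') ⊗ₜ[k] (1:A₂))
            - (((1:A₁) ⊗ₜ[k] b) * ((1:A₁) ⊗ₜ[k] b' - σ b' ⊗ₜ[k] (1:A₂))
              + ((1:A₁) ⊗ₜ[k] b') * ((1:A₁) ⊗ₜ[k] b - σ b ⊗ₜ[k] (1:A₂)))
            = -(((1:A₁) ⊗ₜ[k] b - σ b ⊗ₜ[k] (1:A₂)) * ((1:A₁) ⊗ₜ[k] b' - σ b' ⊗ₜ[k] (1:A₂))) := by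
          simp only [mul_sub, sub_mul, Algebra.TensorProduct.tmul_mul_tmul, one_mul, mul_one,
            map_mul]
          ring
        rw [key, pow_two]
        exact neg_mem (Ideal.mul_mem_mul (hmemE b) (hmemE b'))
    }
  let dΩ : Ω[A₂⁄k] →ₗ[A₂] J.Cotangent := der.liftKaehlerDifferential
  have hdΩ : ∀ b : A₂, dΩ ((KaehlerDifferential.D k A₂) b) = E b :=
    der.liftKaehlerDifferential_comp_D
  let g : S ⊗[A₂] Ω[A₂⁄k] →ₗ[S] J.Cotangent := dΩ.liftBaseChange S
  have hg : ∀ (s : S) (ω : Ω[A₂⁄k]), g (s ⊗ₜ[A₂] ω) = s • dΩ ω := fun s ω => rfl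
  -- Theta identity
  have hmemθ : ∀ p : P, (p - τ p ⊗ₜ[k] (1:A₂)) ∈ J := by
    intro p
    show π (p - τ p ⊗ₜ[k] (1:A₂)) = 0
    rw [map_sub, hπtmul, map_one, mul_one, hτπ, sub_self]
  have hθ : ∀ p : P,
      J.toCotangent ⟨p - τ p ⊗ₜ[k] (1:A₂), hmemθ p⟩ = g (PhiMap k A₁ A₂ S π₁ p) := by
    intro p
    induction p using TensorProduct.induction_on with
    | zero =>
      have h0 : (⟨(0:P) - τ 0 ⊗ₜ[k] (1:A₂), hmemθ 0⟩ : J) = 0 :=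
        Subtype.ext (by
          show (0:P) - τ 0 ⊗ₜ[k] (1:A₂) = 0
          rw [map_zero, TensorProduct.zero_tmul, sub_zero])
      rw [h0, map_zero, map_zero, map_zero]
    | add x y hx hy =>
      have hsum : (⟨x + y - τ (x + y) ⊗ₜ[k] (1:A₂), hmemθ (x+y)⟩ : J)
          = ⟨x - τ x ⊗ₜ[k] (1:A₂), hmemθ x⟩ + ⟨y - τ y ⊗ₜ[k] (1:A₂), hmemθ y⟩ :=
        Subtype.ext (by
          show x + y - τ (x + y) ⊗ₜ[k] (1:A₂)
            = (x - τ x ⊗ₜ[k] (1:A₂)) + (y - τ y ⊗ₜ[k] (1:A₂))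
          rw [map_add, TensorProduct.add_tmul]
          ring)
      rw [hsum, map_add, hx, hy, ← map_add, ← map_add]
    | tmul a b =>
      have hπa : π₁ a = π (a ⊗ₜ[k] (1:A₂)) := by rw [hπtmul, map_one, mul_one]
      rw [PhiMap_tmul, hg, hdΩ, hπa, hπsmul, ← map_smul]
      refine congrArg J.toCotangent (Subtype.ext ?_)
      show a ⊗ₜ[k] b - τ (a ⊗ₜ[k] b) ⊗ₜ[k] (1:A₂)
        = (a ⊗ₜ[k] (1:A₂)) * ((1:A₁) ⊗ₜ[k] b - σ b ⊗ₜ[k] (1:A₂))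
      rw [hτtmul, mul_sub, Algebra.TensorProduct.tmul_mul_tmul,
        Algebra.TensorProduct.tmul_mul_tmul, one_mul, mul_one, mul_one]
  -- decomposition
  have hdecomp : ∀ x : J, J.toCotangent x
      = f₁lin (J₁.toCotangent ⟨τ (x : P), hmemτ _ x.2⟩) + g (PhiMap k A₁ A₂ S π₁ (x : P)) := by
    intro x
    rw [hf₁ _ (hmem1 _ (hmemτ _ x.2)), ← hθ, ← map_add]
    refine congrArg J.toCotangent (Subtype.ext ?_)
    show (x : P) = τ (x : P) ⊗ₜ[k] (1:A₂) + ((x : P) - τ (x : P) ⊗ₜ[k] (1:A₂))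
    ring
  -- f₂ ∘ g = id
  have hf₂smul : ∀ (s : S) (x : J.Cotangent), f₂lin (s • x) = s • f₂lin x := by
    intro s x
    obtain ⟨p, hp⟩ := hπs s
    rw [← hp, hπsmul, map_smul, hPM_smul]
  have hone : ∀ ω : Ω[A₂⁄k], f₂lin (dΩ ω) = (1:S) ⊗ₜ[A₂] ω := by
    intro ω
    have hω : ω ∈ Submodule.span A₂ (Set.range (KaehlerDifferential.D k A₂)) := by
      rw [KaehlerDifferential.span_range_derivation]; trivial
    induction hω using Submodule.span_induction with
    | mem ω hω =>
      obtain ⟨b, rfl⟩ := hω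
      rw [hdΩ]
      have : f₂lin (E b) = PhiMap k A₁ A₂ S π₁ ((1:A₁) ⊗ₜ[k] b - σ b ⊗ₜ[k] (1:A₂)) := hf₂ _
      rw [this, map_sub, PhiMap_tmul, PhiMap_tmul, map_one, Derivation.map_one_eq_zero,
        TensorProduct.tmul_zero, sub_zero]
    | zero => rw [map_zero, map_zero, TensorProduct.tmul_zero]
    | add x y _ _ hx hy => rw [map_add, map_add, hx, hy, TensorProduct.tmul_add]
    | smul b ω _ hω =>
      rw [map_smul, hA2smul, map_smul, hPM_smul, hω, hπtmul, map_one, one_mul,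
        TensorProduct.tmul_smul, ← hω]
      rw [hω, TensorProduct.smul_tmul', TensorProduct.smul_tmul']
      congr 1
      rw [smul_eq_mul, Algebra.smul_def b (1:S), hps]
  have hfg : ∀ m : S ⊗[A₂] Ω[A₂⁄k], f₂lin (g m) = m := by
    intro m
    induction m using TensorProduct.induction_on with
    | zero => rw [map_zero, map_zero]
    | add x y hx hy => rw [map_add, map_add, hx, hy]
    | tmul s ω =>
      rw [hg, hf₂smul, hone, TensorProduct.smul_tmul', smul_eq_mul, mul_one]
  -- retraction of f₁
  letI instPC1 : Module P J₁.Cotangent := Module.compHom _ τ.toRingHom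
  have hPC1smul : ∀ (p : P) (x : J₁.Cotangent), p • x = τ p • x := fun _ _ => rfl
  let ℓ₃ : J →ₗ[P] J₁.Cotangent :=
    { toFun := fun x => J₁.toCotangent ⟨τ (x : P), hmemτ _ x.2⟩
      map_add' := by
        intro x y
        rw [← map_add]
        exact congrArg J₁.toCotangent (Subtype.ext (map_add τ _ _))
      map_smul' := by
        intro p x
        rw [RingHom.id_apply, hPC1smul]
        show J₁.toCotangent ⟨τ ((p • x : J) : P), _⟩ = τ p • J₁.toCotangent ⟨τ (x : P), _⟩
        rw [← map_smul]
        refine congrArg J₁.toCotangent (Subtype.ext ?_)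
        show τ ((p • x : J) : P) = τ p • τ (x : P)
        rw [hcoe_smulP, map_mul, smul_eq_mul] }
  have hℓ₃cond : (J • ⊤ : Submodule P J) ≤ LinearMap.ker ℓ₃ := by
    refine Submodule.smul_le.mpr ?_
    intro r hr n _
    rw [LinearMap.mem_ker]
    show J₁.toCotangent ⟨τ ((r • n : J) : P), _⟩ = 0
    rw [Ideal.toCotangent_eq_zero]
    show τ ((r • n : J) : P) ∈ J₁ ^ 2
    rw [hcoe_smulP, map_mul, pow_two]
    exact Ideal.mul_mem_mul (hmemτ _ hr) (hmemτ _ n.2)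
  let rlin : J.Cotangent →ₗ[P] J₁.Cotangent := Submodule.liftQ _ ℓ₃ hℓ₃cond
  have hretr : ∀ y : J₁.Cotangent, rlin (f₁lin y) = y := by
    intro y
    obtain ⟨x, rfl⟩ := J₁.toCotangent_surjective y
    rw [hf₁ _ (hmem1 _ x.2)]
    show J₁.toCotangent ⟨τ ((x : A₁) ⊗ₜ[k] (1:A₂)), _⟩ = J₁.toCotangent x
    refine congrArg J₁.toCotangent (Subtype.ext ?_)
    show τ ((x : A₁) ⊗ₜ[k] (1:A₂)) = (x : A₁)
    rw [hτtmul, map_one, mul_one]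
  -- assemble
  refine ⟨f₁lin.toAddMonoidHom, f₂lin.toAddMonoidHom, hf₁, hf₂, ?_, ?_, fun m => ⟨g m, hfg m⟩⟩
  · intro a b hab
    rw [← hretr a, ← hretr b]
    exact congrArg rlin hab
  · intro y
    constructor
    · intro h0
      obtain ⟨x, rfl⟩ := J.toCotangent_surjective y
      have hΦ : PhiMap k A₁ A₂ S π₁ (x : P) = 0 := by rw [← hf₂ x]; exact h0
      refine ⟨J₁.toCotangent ⟨τ (x : P), hmemτ _ x.2⟩, ?_⟩
      rw [hdecomp x, hΦ, map_zero, add_zero]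
      rfl
    · rintro ⟨z, rfl⟩
      obtain ⟨w, rfl⟩ := J₁.toCotangent_surjective z
      show f₂lin (f₁lin (J₁.toCotangent w)) = 0
      rw [hf₁ _ (hmem1 _ w.2), hf₂]
      show PhiMap k A₁ A₂ S π₁ ((w : A₁) ⊗ₜ[k] (1:A₂)) = 0
      rw [PhiMap_tmul, Derivation.map_one_eq_zero, TensorProduct.tmul_zero]

end

theorem statement8 (π₁ : A₁ →ₐ[k] S) (π₂ : A₂ →ₐ[k] S)
    (h₁ : Function.Surjective π₁) (h₂ : Function.Surjective π₂)
    (σ : A₂ →ₐ[k] A₁) (hσ : π₁.comp σ = π₂) :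
    letI _alg : Algebra A₂ S := π₂.toRingHom.toAlgebra
    letI _tow : IsScalarTower k A₂ S :=
      IsScalarTower.of_algebraMap_eq fun c => (π₂.commutes c).symm
    ∃ (f₁ : (RingHom.ker π₁).Cotangent →+ (RingHom.ker (pi12 k A₁ A₂ S π₁ π₂)).Cotangent)
      (f₂ : (RingHom.ker (pi12 k A₁ A₂ S π₁ π₂)).Cotangent →+ S ⊗[A₂] Ω[A₂⁄k]),
      -- `f₁` is induced by `a ↦ a ⊗ 1`
      (∀ (x : RingHom.ker π₁)
          (h : ((x : A₁) ⊗ₜ[k] (1 : A₂)) ∈ RingHom.ker (pi12 k A₁ A₂ S π₁ π₂)),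
          f₁ ((RingHom.ker π₁).toCotangent x) =
            (RingHom.ker (pi12 k A₁ A₂ S π₁ π₂)).toCotangent ⟨(x : A₁) ⊗ₜ[k] (1 : A₂), h⟩) ∧
      -- `f₂` is induced by `a ⊗ b ↦ π₁(a) ⊗ d(b)`
      (∀ x : RingHom.ker (pi12 k A₁ A₂ S π₁ π₂),
          f₂ ((RingHom.ker (pi12 k A₁ A₂ S π₁ π₂)).toCotangent x) =
            PhiMap k A₁ A₂ S π₁ (x : A₁ ⊗[k] A₂)) ∧
      -- exactness of `0 → J₁/J₁² → J₁₂/J₁₂² → S ⊗[A₂] Ω[A₂⁄k] → 0`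
      Function.Injective f₁ ∧ Function.Exact f₁ f₂ ∧ Function.Surjective f₂ := by
  letI _alg : Algebra A₂ S := π₂.toRingHom.toAlgebra
  letI _tow : IsScalarTower k A₂ S :=
    IsScalarTower.of_algebraMap_eq fun c => (π₂.commutes c).symm
  exact statement8_aux π₁ π₂ h₁ σ hσ (fun b => rfl)

end
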